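/- Let (C, D, T') be a quantum Manin pair and set 𝓕 = T(T^R(𝟙_D)), a monoid object in D with multiplication m_𝓕. Then the identity morphism of 𝓕 is a quantum moment map; equivalently, the multiplication of 𝓕 is invariant under the half-braiding: m_𝓕 = τ_{T^R(𝟙_D), 𝓕} ≫ m_𝓕 as morphisms 𝓕 ⊗ 𝓕 ⟶ 𝓕, where τ_{T^R(𝟙_D), 𝓕} : 𝓕 ⊗ 𝓕 ⟶ 𝓕 ⊗ 𝓕 is the half-braiding of T'(T^R(𝟙_D)) evaluated at 𝓕. -/

import Mathlib

/-!
The monoid `T^R(𝟙)` is commutative in `C`. Under the adjunction its multiplication corresponds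
to `δ ≫ (ε ⊗ ε) ≫ λ`, where `ε` is the counit at `𝟙`, and `T` carries the braiding of `C` to
the half-braiding `τ`. Since a half-braiding is trivial at `𝟙`, naturality shows that `τ` fixes
`(ε ⊗ ε) ≫ λ`. Then `T` turns the commutativity `β ≫ m = m` into `m_𝓕 = τ ≫ m_𝓕`.
-/

open CategoryTheory MonoidalCategory CategoryTheory.Functor
open scoped MonObj

universe v₁ v₂ u₁ u₂

namespace CategoryTheory

namespace HalfBraiding

variable {D : Type u₂} [Category.{v₂} D] [MonoidalCategory D] {X : D} (b : HalfBraiding X)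

lemma β_tensorUnit_hom : (b.β (𝟙_ D)).hom = (ρ_ X).hom ≫ (λ_ X).inv :=
  (Iso.eq_comp_inv _).2 (congrArg Center.Hom.f (braiding_leftUnitor (C := Center D) ⟨X, b⟩))

lemma β_hom_comp_tensorHom_comp_leftUnitor {V : D} (e : X ⟶ 𝟙_ D) (f : V ⟶ 𝟙_ D) :
    (b.β V).hom ≫ (f ⊗ₘ e) ≫ (λ_ (𝟙_ D)).hom = (e ⊗ₘ f) ≫ (λ_ (𝟙_ D)).hom := by
  rw [MonoidalCategory.tensorHom_def, Category.assoc, ← b.naturality_assoc, β_tensorUnit_hom,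
    MonoidalCategory.tensorHom_def']
  simp [unitors_inv_equal]

end HalfBraiding

section

variable {C : Type u₁} [Category.{v₁} C] [MonoidalCategory C]
  {D : Type u₂} [Category.{v₂} D] [MonoidalCategory D]

lemma Adjunction.map_mul_comp_counit_app_tensorUnit {F : C ⥤ D} {G : D ⥤ C} [F.OplaxMonoidal]
    [G.LaxMonoidal] (adj : F ⊣ G) [adj.IsMonoidal] :
    F.map (LaxMonoidal.μ G (𝟙_ D) (𝟙_ D) ≫ G.map (λ_ (𝟙_ D)).hom) ≫ adj.counit.app (𝟙_ D) =
      OplaxMonoidal.δ F _ _ ≫ (adj.counit.app (𝟙_ D) ⊗ₘ adj.counit.app (𝟙_ D)) ≫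
        (λ_ (𝟙_ D)).hom := by
  rw [Functor.map_comp, Category.assoc]
  erw [adj.counit_naturality]
  rw [Adjunction.map_μ_comp_counit_app_tensor_assoc]

variable [BraidedCategory C]

lemma Center.μ_comp_map_braiding_hom (T' : C ⥤ Center D) [T'.LaxBraided] (X Y : C) :
    LaxMonoidal.μ (T' ⋙ Center.forget D) X Y ≫ (T' ⋙ Center.forget D).map (β_ X Y).hom =
      ((T'.obj X).2.β (T'.obj Y).1).hom ≫ LaxMonoidal.μ (T' ⋙ Center.forget D) Y X := by
  have h := congrArg Center.Hom.f (LaxBraided.braided (F := T') X Y)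
  simp only [LaxMonoidal.comp_μ, Center.forget_μ, Functor.comp_map, Center.forget_map]
  erw [Category.id_comp, Category.id_comp]
  exact h

lemma Functor.mapMon_mul_eq_comp_mul (T : C ⥤ D) [T.LaxMonoidal] (M : Mon C)
    [IsCommMonObj M.X] {τ : T.obj M.X ⊗ T.obj M.X ⟶ T.obj M.X ⊗ T.obj M.X}
    (hτ : LaxMonoidal.μ T M.X M.X ≫ T.map (β_ M.X M.X).hom = τ ≫ LaxMonoidal.μ T M.X M.X) :
    μ[(T.mapMon.obj M).X] = τ ≫ μ[(T.mapMon.obj M).X] := by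
  change LaxMonoidal.μ T _ _ ≫ T.map μ[M.X] = τ ≫ LaxMonoidal.μ T _ _ ≫ T.map μ[M.X]
  rw [← reassoc_of% hτ, ← Functor.map_comp, IsCommMonObj.mul_comm]

lemma Adjunction.isCommMonObj_mapMon_trivial {F : C ⥤ D} {G : D ⥤ C} [F.Monoidal]
    [G.LaxMonoidal] (adj : F ⊣ G) [adj.IsMonoidal]
    {τ : F.obj (G.obj (𝟙_ D)) ⊗ F.obj (G.obj (𝟙_ D)) ⟶ F.obj (G.obj (𝟙_ D)) ⊗ F.obj (G.obj (𝟙_ D))}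
    (hτ : LaxMonoidal.μ F _ _ ≫ F.map (β_ (G.obj (𝟙_ D)) (G.obj (𝟙_ D))).hom =
      τ ≫ LaxMonoidal.μ F _ _)
    (hτε : τ ≫ (adj.counit.app (𝟙_ D) ⊗ₘ adj.counit.app (𝟙_ D)) ≫ (λ_ (𝟙_ D)).hom =
      (adj.counit.app (𝟙_ D) ⊗ₘ adj.counit.app (𝟙_ D)) ≫ (λ_ (𝟙_ D)).hom) :
    IsCommMonObj (G.mapMon.obj (Mon.trivial D)).X where
  mul_comm := by
    change (β_ _ _).hom ≫ LaxMonoidal.μ G (𝟙_ D) (𝟙_ D) ≫ G.map (λ_ (𝟙_ D)).hom =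
      LaxMonoidal.μ G (𝟙_ D) (𝟙_ D) ≫ G.map (λ_ (𝟙_ D)).hom
    have hβ : F.map (β_ (G.obj (𝟙_ D)) (G.obj (𝟙_ D))).hom =
        OplaxMonoidal.δ F _ _ ≫ τ ≫ LaxMonoidal.μ F _ _ := by
      rw [← hτ, Monoidal.δ_μ_assoc]
    apply (adj.homEquiv _ _).symm.injective
    rw [homEquiv_counit, homEquiv_counit, Functor.map_comp, Category.assoc,
      adj.map_mul_comp_counit_app_tensorUnit, hβ]
    simp only [Category.assoc, Monoidal.μ_δ_assoc, hτε]

end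

end CategoryTheory

theorem stmt_5 {C : Type u₁} [Category.{v₁} C] [MonoidalCategory C] [BraidedCategory C]
    {D : Type u₂} [Category.{v₂} D] [MonoidalCategory D]
    (T' : C ⥤ Center D) [T'.Braided]
    (TR : D ⥤ C) [TR.LaxMonoidal]
    (adj : (T' ⋙ Center.forget D) ⊣ TR) [adj.IsMonoidal]
    :
    -- `𝓕 = T(T^R(𝟙_D))` as a monoid object in `D`:
    let F : Mon D := ((T' ⋙ Center.forget D).mapMon).obj ((TR.mapMon).obj (Mon.trivial D))
    F.mon.mul = ((T'.obj (TR.obj (𝟙_ D))).2.β F.X).hom ≫ F.mon.mul := by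
  have hτ := Center.μ_comp_map_braiding_hom T' (TR.obj (𝟙_ D)) (TR.obj (𝟙_ D))
  have := adj.isCommMonObj_mapMon_trivial hτ
    ((T'.obj _).2.β_hom_comp_tensorHom_comp_leftUnitor (adj.counit.app _) (adj.counit.app _))
  exact (T' ⋙ Center.forget D).mapMon_mul_eq_comp_mul _ hτ
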